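/- arXiv:2009.04013 — 3 statements merged into one kernel-verified Lean document; each statement's English description precedes it below -/
import Mathlib

section
/- Let f and g be probability density functions of two Gaussian distributions on ℝ with the same variance σ² > 0 and means μ₁, μ₂ satisfying |μ₁ - μ₂| ≤ Δ. If σ² ≥ 2 log(1.25/δ) · (Δ/ε)² for ε ∈ (0,1) and δ ∈ (0,1), then for every measurable set T ⊆ ℝ, the Gaussian measure with mean μ₁ assigns to T probability at most exp(ε) times the probability assigned by the Gaussian measure with mean μ₂, plus δ. -/
open MeasureTheory ProbabilityTheory Real Set
open scoped ENNReal NNReal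

/-!
With `d = μ₁ - μ₂ > 0`, the log-likelihood ratio of `N(μ₁, v)` against `N(μ₂, v)` is affine in `x`,
so it exceeds `ε` only on the half-line `x > μ₁ + s`, `s = v ε / d - d / 2`. Off this half-line the
densities compare with factor `exp ε`, and the calibration makes the `N(μ₁, v)`-mass of the
half-line at most `δ`: for `s ≥ 0`, comparing with `N(μ₁ + s, v)` bounds it by `exp (-s² / 2v) / 2`;
for `s < 0` the calibration forces `δ ≥ 15/16`, while the mass is at most `1/2 + |s| / √(2πv)`.
The case `μ₁ < μ₂` follows by the reflection `x ↦ -x`.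
-/

theorem MeasureTheory.withDensity_apply_le_mul_add {α : Type*} [MeasurableSpace α]
    {m : Measure α} {f g : α → ℝ≥0∞} {c : ℝ≥0∞} {B T : Set α} (hg : Measurable g)
    (hB : MeasurableSet B) (hT : MeasurableSet T) (hfg : ∀ x ∉ B, f x ≤ c * g x) :
    m.withDensity f T ≤ c * m.withDensity g T + m.withDensity f B :=
  calc m.withDensity f T ≤ m.withDensity f (T \ B) + m.withDensity f B :=
        (measure_mono (by simp)).trans (measure_union_le _ _)
    _ = ∫⁻ x in T \ B, f x ∂m + m.withDensity f B := by rw [withDensity_apply _ (hT.diff hB)]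
    _ ≤ ∫⁻ x in T \ B, c * g x ∂m + m.withDensity f B :=
        add_le_add (setLIntegral_mono (hg.const_mul c) fun x hx ↦ hfg x hx.2) le_rfl
    _ ≤ c * m.withDensity g T + m.withDensity f B := by
        rw [lintegral_const_mul c hg, withDensity_apply _ hT]
        gcongr
        exact sdiff_subset

section Calibration

variable {v d ε δ : ℝ}

lemma exp_neg_sq_div_le_of_calibrated (hv : 0 < v) (hd : 0 < d) (hε : ε ≤ 1) (hδ : 0 < δ)
    (hcal : 2 * log (1.25 / δ) * d ^ 2 ≤ v * ε ^ 2) :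
    exp (-(v * ε / d - d / 2) ^ 2 / (2 * v)) ≤ δ * 2 := by
  set L := log (1.25 / δ)
  have hδL : δ = 1.25 * exp (-L) := by rw [exp_neg, exp_log (by positivity)]; field_simp
  have hs : (2 * L - 1) * v ≤ (v * ε / d - d / 2) ^ 2 := by
    refine le_of_mul_le_mul_right ?_ (by positivity : 0 < d ^ 2)
    have hsd : (v * ε / d - d / 2) * d = v * ε - d ^ 2 / 2 := by field_simp
    rw [← mul_pow, hsd]
    nlinarith [mul_le_mul_of_nonneg_left hcal hv.le,
      mul_le_mul_of_nonneg_left hε (by positivity : 0 ≤ v * d ^ 2)]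
  have hexp_half : exp (1 / 2) ≤ 2 := by
    have h₁ := add_one_le_exp (-(1 / 2))
    have h₂ : exp (1 / 2) * exp (-(1 / 2)) = 1 := by rw [← exp_add]; norm_num
    nlinarith [exp_pos (1 / 2)]
  calc exp (-(v * ε / d - d / 2) ^ 2 / (2 * v)) ≤ exp (1 / 2 + -L) := by
        rw [exp_le_exp, div_le_iff₀ (by positivity)]; nlinarith
    _ = exp (1 / 2) * exp (-L) := exp_add _ _
    _ ≤ δ * 2 := by rw [hδL]; nlinarith [exp_pos (-L)]

lemma inv_two_add_div_sqrt_le_of_calibrated (hv : 0 < v) (hd : 0 < d) (hε : ε ∈ Ioo 0 1)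
    (hδ : δ ∈ Ioo 0 1) (hcal : 2 * log (1.25 / δ) * d ^ 2 ≤ v * ε ^ 2)
    (hs : v * ε / d - d / 2 ≤ 0) :
    2⁻¹ + -(v * ε / d - d / 2) / √(2 * π * v) ≤ δ := by
  obtain ⟨hε₀, hε₁⟩ := hε
  obtain ⟨hδ₀, hδ₁⟩ := hδ
  have hL : 1 / 5 ≤ log (1.25 / δ) := by
    have := one_sub_inv_le_log_of_pos (by positivity : (0 : ℝ) < 1.25 / δ)
    rw [inv_div] at this
    linarith [div_le_div_of_nonneg_right hδ₁.le (by norm_num : (0 : ℝ) ≤ 1.25)]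
  set L := log (1.25 / δ)
  have hδL : δ = 1.25 * exp (-L) := by rw [exp_neg, exp_log (by positivity)]; field_simp
  have hvε : v * ε ≤ d ^ 2 / 2 := by
    have := mul_le_mul_of_nonneg_right hs hd.le
    rw [zero_mul, sub_mul, div_mul_cancel₀ _ hd.ne', sub_nonpos] at this
    linarith
  have hL₁ : 4 * L ≤ ε := by
    refine le_of_mul_le_mul_right ?_ (by positivity : 0 < d ^ 2)
    nlinarith [mul_le_mul_of_nonneg_left hvε hε₀.le]
  have hδ₂ : 15 / 16 ≤ δ := by rw [hδL]; linarith [add_one_le_exp (-L)]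
  have hd₂ : d ^ 2 ≤ 5 / 2 * v := by nlinarith [mul_le_mul_of_nonneg_left hε₁.le hv.le]
  have hs₁ : -(v * ε / d - d / 2) ≤ d / 2 := by
    linarith [div_nonneg (mul_nonneg hv.le hε₀.le) hd.le]
  have hsqrt : 16 / 7 * -(v * ε / d - d / 2) ≤ √(2 * π * v) := by
    rw [Real.le_sqrt (by linarith) (by positivity)]
    nlinarith [pi_gt_three]
  have hratio : -(v * ε / d - d / 2) / √(2 * π * v) ≤ 7 / 16 := by
    rw [div_le_iff₀ (by positivity)]; linarith
  linarith

end Calibration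

namespace ProbabilityTheory

lemma gaussianPDFReal_eq_exp_mul (a b : ℝ) (v : ℝ≥0) (x : ℝ) :
    gaussianPDFReal a v x = exp (((x - b) ^ 2 - (x - a) ^ 2) / (2 * v)) * gaussianPDFReal b v x := by
  rw [gaussianPDFReal, gaussianPDFReal, mul_left_comm, ← exp_add]
  ring_nf

lemma gaussianPDF_le_ofReal_exp_mul {a b c x : ℝ} {v : ℝ≥0} (hv : v ≠ 0)
    (h : (x - b) ^ 2 - (x - a) ^ 2 ≤ 2 * v * c) :
    gaussianPDF a v x ≤ ENNReal.ofReal (exp c) * gaussianPDF b v x := by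
  rw [gaussianPDF, gaussianPDF, ← ENNReal.ofReal_mul (exp_nonneg c), gaussianPDFReal_eq_exp_mul a b]
  refine ENNReal.ofReal_le_ofReal (mul_le_mul_of_nonneg_right ?_ (gaussianPDFReal_nonneg _ _ _))
  rw [exp_le_exp, div_le_iff₀ (by positivity)]
  linarith

lemma gaussianPDFReal_le (μ : ℝ) (v : ℝ≥0) (x : ℝ) : gaussianPDFReal μ v x ≤ (√(2 * π * v))⁻¹ :=
  mul_le_of_le_one_right (by positivity) <| exp_le_one_iff.2 <|
    div_nonpos_of_nonpos_of_nonneg (neg_nonpos.2 (sq_nonneg _)) (by positivity)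

lemma gaussianReal_le_smul_volume (μ : ℝ) {v : ℝ≥0} (hv : v ≠ 0) :
    gaussianReal μ v ≤ ENNReal.ofReal (√(2 * π * v))⁻¹ • volume := by
  rw [gaussianReal_of_var_ne_zero μ hv, ← withDensity_const]
  exact withDensity_mono (ae_of_all _ fun x ↦ ENNReal.ofReal_le_ofReal (gaussianPDFReal_le μ v x))

lemma gaussianReal_Ioi_self (μ : ℝ) {v : ℝ≥0} (hv : v ≠ 0) : gaussianReal μ v (Ioi μ) = 2⁻¹ := by
  have := nullSingletonClass_gaussianReal (μ := μ) hv
  have hsymm : gaussianReal μ v (Ioi μ) = gaussianReal μ v (Iic μ) := by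
    have hmap : (gaussianReal μ v).map (2 * μ - ·) = gaussianReal μ v := by
      rw [gaussianReal_map_const_sub]; ring_nf
    rw [← measure_congr Iio_ae_eq_Iic, ← hmap, Measure.map_apply (by fun_prop) measurableSet_Iio]
    congr 1
    ext x
    simp only [mem_Ioi, mem_preimage, mem_Iio]
    constructor <;> intro h <;> linarith
  have hsum := measure_add_measure_compl (μ := gaussianReal μ v) (measurableSet_Iic (a := μ))
  rw [compl_Iic, ← hsymm, measure_univ, ← two_mul] at hsum
  rwa [← one_div, ENNReal.eq_div_iff two_ne_zero ENNReal.ofNat_ne_top]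

lemma gaussianReal_Ioi_add_le_of_nonneg (μ : ℝ) {v : ℝ≥0} (hv : v ≠ 0) {s : ℝ} (hs : 0 ≤ s) :
    gaussianReal μ v (Ioi (μ + s)) ≤ ENNReal.ofReal (exp (-s ^ 2 / (2 * v))) / 2 :=
  calc gaussianReal μ v (Ioi (μ + s))
      = ∫⁻ x in Ioi (μ + s), gaussianPDF μ v x := gaussianReal_apply μ hv _
    _ ≤ ∫⁻ x in Ioi (μ + s), ENNReal.ofReal (exp (-s ^ 2 / (2 * v))) * gaussianPDF (μ + s) v x :=
        setLIntegral_mono ((measurable_gaussianPDF _ _).const_mul _) fun x hx ↦ by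
          refine gaussianPDF_le_ofReal_exp_mul hv ?_
          have hv' : (v : ℝ) ≠ 0 := by exact_mod_cast hv
          rw [mul_div_cancel₀ _ (by positivity)]
          nlinarith [mul_nonneg hs (sub_nonneg.2 (mem_Ioi.1 hx).le)]
    _ = ENNReal.ofReal (exp (-s ^ 2 / (2 * v))) * gaussianReal (μ + s) v (Ioi (μ + s)) := by
        rw [lintegral_const_mul _ (measurable_gaussianPDF _ _), gaussianReal_apply _ hv]
    _ = ENNReal.ofReal (exp (-s ^ 2 / (2 * v))) / 2 := by
        rw [gaussianReal_Ioi_self _ hv, ← div_eq_mul_inv]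

lemma gaussianReal_Ioi_add_le_of_nonpos (μ : ℝ) {v : ℝ≥0} (hv : v ≠ 0) {s : ℝ} (hs : s ≤ 0) :
    gaussianReal μ v (Ioi (μ + s)) ≤ 2⁻¹ + ENNReal.ofReal (-s / √(2 * π * v)) := by
  rw [← Ioc_union_Ioi_eq_Ioi (by linarith : μ + s ≤ μ), add_comm (2⁻¹ : ℝ≥0∞)]
  refine (measure_union_le _ _).trans (add_le_add ?_ (gaussianReal_Ioi_self μ hv).le)
  calc gaussianReal μ v (Ioc (μ + s) μ)
      ≤ (ENNReal.ofReal (√(2 * π * v))⁻¹ • volume) (Ioc (μ + s) μ) :=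
        gaussianReal_le_smul_volume μ hv _
    _ = ENNReal.ofReal (-s / √(2 * π * v)) := by
        rw [Measure.smul_apply, smul_eq_mul, volume_Ioc, ← ENNReal.ofReal_mul (by positivity)]
        congr 1
        ring

lemma gaussianReal_Ioi_le_of_calibrated (μ : ℝ) {v : ℝ≥0} (hv : v ≠ 0) {d ε δ : ℝ} (hd : 0 < d)
    (hε : ε ∈ Ioo 0 1) (hδ : δ ∈ Ioo 0 1) (hcal : 2 * log (1.25 / δ) * d ^ 2 ≤ v * ε ^ 2) :
    gaussianReal μ v (Ioi (μ + (v * ε / d - d / 2))) ≤ ENNReal.ofReal δ := by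
  have hv₀ : (0 : ℝ) < v := by positivity
  rcases le_total 0 (v * ε / d - d / 2) with hs | hs
  · refine (gaussianReal_Ioi_add_le_of_nonneg μ hv hs).trans (ENNReal.div_le_of_le_mul ?_)
    rw [← ENNReal.ofReal_ofNat 2, ← ENNReal.ofReal_mul hδ.1.le]
    exact ENNReal.ofReal_le_ofReal (exp_neg_sq_div_le_of_calibrated hv₀ hd hε.2.le hδ.1 hcal)
  · refine (gaussianReal_Ioi_add_le_of_nonpos μ hv hs).trans ?_
    rw [← ENNReal.ofReal_ofNat 2, ← ENNReal.ofReal_inv_of_pos two_pos,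
      ← ENNReal.ofReal_add (by norm_num) (div_nonneg (neg_nonneg.2 hs) (sqrt_nonneg _))]
    exact ENNReal.ofReal_le_ofReal (inv_two_add_div_sqrt_le_of_calibrated hv₀ hd hε hδ hcal hs)

theorem gaussianReal_le_exp_mul_add_of_lt {μ₁ μ₂ ε δ : ℝ} {v : ℝ≥0} (hv : v ≠ 0) (h : μ₂ < μ₁)
    (hε : ε ∈ Ioo 0 1) (hδ : δ ∈ Ioo 0 1)
    (hcal : 2 * log (1.25 / δ) * (μ₁ - μ₂) ^ 2 ≤ v * ε ^ 2) {T : Set ℝ} (hT : MeasurableSet T) :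
    gaussianReal μ₁ v T ≤ ENNReal.ofReal (exp ε) * gaussianReal μ₂ v T + ENNReal.ofReal δ := by
  have hd : 0 < μ₁ - μ₂ := sub_pos.2 h
  rw [gaussianReal_of_var_ne_zero _ hv, gaussianReal_of_var_ne_zero _ hv]
  refine (withDensity_apply_le_mul_add (B := Ioi (μ₁ + (v * ε / (μ₁ - μ₂) - (μ₁ - μ₂) / 2)))
    (measurable_gaussianPDF μ₂ v) measurableSet_Ioi hT
    fun x hx ↦ gaussianPDF_le_ofReal_exp_mul hv ?_).trans (add_le_add le_rfl ?_)
  · have hx' := mul_le_mul_of_nonneg_left (not_lt.1 hx) hd.le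
    have hcancel : (μ₁ - μ₂) * (v * ε / (μ₁ - μ₂)) = v * ε := mul_div_cancel₀ _ hd.ne'
    nlinarith
  · rw [← gaussianReal_of_var_ne_zero _ hv]
    exact gaussianReal_Ioi_le_of_calibrated μ₁ hv hd hε hδ hcal

end ProbabilityTheory

/-- Gaussian mechanism core privacy inequality. -/
theorem gaussian_mechanism_privacy
    (σ2 : NNReal) (hσ : (0 : ℝ) < σ2)
    (μ₁ μ₂ Δ ε δ : ℝ)
    (hΔ : |μ₁ - μ₂| ≤ Δ)
    (hε : ε ∈ Set.Ioo (0 : ℝ) 1) (hδ : δ ∈ Set.Ioo (0 : ℝ) 1)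
    (hcal : (σ2 : ℝ) ≥ 2 * Real.log (1.25 / δ) * (Δ / ε) ^ 2) :
    ∀ T : Set ℝ, MeasurableSet T →
      gaussianReal μ₁ σ2 T ≤
        ENNReal.ofReal (Real.exp ε) * gaussianReal μ₂ σ2 T + ENNReal.ofReal δ := by
  intro T hT
  have hv : σ2 ≠ 0 := by exact_mod_cast hσ.ne'
  have hL : 0 ≤ log (1.25 / δ) := log_nonneg (by rw [le_div_iff₀ hδ.1]; linarith [hδ.2])
  have hcal' : 2 * log (1.25 / δ) * (μ₁ - μ₂) ^ 2 ≤ σ2 * ε ^ 2 :=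
    calc 2 * log (1.25 / δ) * (μ₁ - μ₂) ^ 2 ≤ 2 * log (1.25 / δ) * Δ ^ 2 := by
          rw [← sq_abs]; gcongr
      _ = 2 * log (1.25 / δ) * (Δ / ε) ^ 2 * ε ^ 2 := by field_simp [hε.1.ne']
      _ ≤ σ2 * ε ^ 2 := by gcongr
  have hneg : ∀ μ, gaussianReal μ σ2 T = gaussianReal (-μ) σ2 ((-·) ⁻¹' T) := fun μ ↦ by
    rw [← Measure.map_apply measurable_neg hT, gaussianReal_map_neg, neg_neg]
  rcases lt_trichotomy μ₂ μ₁ with h | rfl | h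
  · exact gaussianReal_le_exp_mul_add_of_lt hv h hε hδ hcal' hT
  · exact le_add_right (le_mul_of_one_le_left' (ENNReal.one_le_ofReal.2 (one_le_exp hε.1.le)))
  · rw [hneg μ₁, hneg μ₂]
    refine gaussianReal_le_exp_mul_add_of_lt hv (neg_lt_neg h) hε hδ ?_ (hT.preimage measurable_neg)
    rwa [neg_sub_neg, ← neg_sub, neg_sq]
end

section
/- Let P and Q be probability measures on ℝ such that both max-divergences D(P‖Q) and D(Q‖P) are at most λ. Let P' and Q' be probability measures such that for all measurable sets T, P'(T) ≤ e^ε Q'(T) + δ. Suppose P is the convolution of a measure ν_P with noise measure μ_Z, P' the convolution of a measure ν'_P with μ_Z, where D(ν_P‖ν'_P) ≤ λ and D(ν'_P‖ν_P) ≤ λ, and similarly for Q, Q'. Then for all measurable T, P(T) ≤ e^{ε + 2λ} Q(T) + e^λ δ. -/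
open MeasureTheory ProbabilityTheory
open scoped MeasureTheory

/-- Max-divergence bound: `D(P‖Q) ≤ λ` iff `P T ≤ e^λ Q T` for all measurable `T`. -/
def MaxDivLe (P Q : Measure ℝ) (lam : ℝ) : Prop :=
  ∀ T : Set ℝ, MeasurableSet T → P T ≤ ENNReal.ofReal (Real.exp lam) * Q T

lemma maxDivLe_conv (ν ν' μZ : Measure ℝ) [SFinite ν] [SFinite ν'] [SFinite μZ]
    (lam : ℝ) (h : MaxDivLe ν ν' lam) :
    MaxDivLe (Measure.conv ν μZ) (Measure.conv ν' μZ) lam := by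
  intro T hT
  have hadd : Measurable (fun p : ℝ × ℝ => p.1 + p.2) := by fun_prop
  rw [Measure.conv, Measure.conv, Measure.map_apply hadd hT, Measure.map_apply hadd hT,
    Measure.prod_apply_symm (hadd hT), Measure.prod_apply_symm (hadd hT)]
  calc ∫⁻ z, ν ((fun x => (x, z)) ⁻¹' ((fun p : ℝ × ℝ => p.1 + p.2) ⁻¹' T)) ∂μZ
      ≤ ∫⁻ z, ENNReal.ofReal (Real.exp lam) *
          ν' ((fun x => (x, z)) ⁻¹' ((fun p : ℝ × ℝ => p.1 + p.2) ⁻¹' T)) ∂μZ := by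
        refine lintegral_mono fun z => h _ ?_
        exact hT.preimage (by fun_prop)
    _ = _ := lintegral_const_mul _ (by
        have : Measurable fun z => ν' ((fun x => (x + z)) ⁻¹' T) :=
          measurable_measure_prodMk_right (μ := ν') (hadd hT) |>.comp measurable_id |>.mono le_rfl le_rfl
        exact this)

/-- approximation step of the Attribute-Private Gaussian Mechanism for
non-Gaussian data: if the true output distributions `P, Q` are convolutions (with a fixed
noise measure `μZ`) of measures that are within max-divergence `λ` of the approximating
measures whose convolutions `P', Q'` satisfy an `(ε, δ)` guarantee, then `P, Q` satisfy an
`(ε + 2λ, e^λ δ)` guarantee. -/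
theorem approx_gaussian_privacy
    (P Q P' Q' νP νP' νQ νQ' μZ : Measure ℝ)
    [IsProbabilityMeasure P] [IsProbabilityMeasure Q]
    [IsProbabilityMeasure P'] [IsProbabilityMeasure Q']
    [IsProbabilityMeasure νP] [IsProbabilityMeasure νP']
    [IsProbabilityMeasure νQ] [IsProbabilityMeasure νQ']
    [IsProbabilityMeasure μZ]
    (lam ε δ : ℝ)
    (hPQ : MaxDivLe P Q lam) (hQP : MaxDivLe Q P lam)
    (hP : P = Measure.conv νP μZ) (hP' : P' = Measure.conv νP' μZ)
    (hQ : Q = Measure.conv νQ μZ) (hQ' : Q' = Measure.conv νQ' μZ)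
    (hνP : MaxDivLe νP νP' lam) (hνP' : MaxDivLe νP' νP lam)
    (hνQ : MaxDivLe νQ νQ' lam) (hνQ' : MaxDivLe νQ' νQ lam)
    (hpriv : ∀ T : Set ℝ, MeasurableSet T →
      P' T ≤ ENNReal.ofReal (Real.exp ε) * Q' T + ENNReal.ofReal δ) :
    ∀ T : Set ℝ, MeasurableSet T →
      P T ≤ ENNReal.ofReal (Real.exp (ε + 2 * lam)) * Q T +
        ENNReal.ofReal (Real.exp lam * δ) := by
  intro T hT
  have hPP' : P T ≤ ENNReal.ofReal (Real.exp lam) * P' T := by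
    rw [hP, hP']; exact maxDivLe_conv νP νP' μZ lam hνP T hT
  have hQ'Q : Q' T ≤ ENNReal.ofReal (Real.exp lam) * Q T := by
    rw [hQ, hQ']; exact maxDivLe_conv νQ' νQ μZ lam hνQ' T hT
  have h1 : P T ≤ ENNReal.ofReal (Real.exp lam) *
      (ENNReal.ofReal (Real.exp ε) * Q' T + ENNReal.ofReal δ) :=
    hPP'.trans (mul_le_mul_right (hpriv T hT) _)
  refine h1.trans ?_
  rw [mul_add]
  refine add_le_add ?_ ?_
  · calc ENNReal.ofReal (Real.exp lam) * (ENNReal.ofReal (Real.exp ε) * Q' T)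
        ≤ ENNReal.ofReal (Real.exp lam) * (ENNReal.ofReal (Real.exp ε) *
            (ENNReal.ofReal (Real.exp lam) * Q T)) := by
          exact mul_le_mul_right (mul_le_mul_right hQ'Q _) _
      _ = ENNReal.ofReal (Real.exp (ε + 2 * lam)) * Q T := by
          rw [← mul_assoc, ← mul_assoc, ← ENNReal.ofReal_mul (Real.exp_pos _).le,
            ← ENNReal.ofReal_mul (by positivity), ← Real.exp_add, ← Real.exp_add]
          ring_nf
  · rw [ENNReal.ofReal_mul (Real.exp_pos _).le]
end

section
/- Let μ and ν be probability measures on ℝ and let W_∞(μ, ν) ≤ W, where W_∞ is the ∞-Wasserstein distance. Let Z be a Laplace random variable with scale W/ε independent of everything else. Then for any measurable set T and any x: if Y_μ ~ μ and Y_ν ~ ν, we have P(Y_μ + Z ∈ T) ≤ e^ε P(Y_ν + Z ∈ T). -/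
open MeasureTheory ProbabilityTheory

/-- The Laplace measure on `ℝ` with scale `b`, with density `(1/2b) exp(-|z|/b)`. -/
noncomputable def laplaceMeasure (b : ℝ) : Measure ℝ :=
  volume.withDensity (fun z => ENNReal.ofReal ((1 / (2 * b)) * Real.exp (-|z| / b)))

/-- `γ` is a coupling of `μ` and `ν` witnessing `W_∞(μ, ν) ≤ W`. -/
def IsWinftyCouplingLe (μ ν : Measure ℝ) (W : ℝ) : Prop :=
  ∃ γ : Measure (ℝ × ℝ), IsProbabilityMeasure γ ∧
    γ.map Prod.fst = μ ∧ γ.map Prod.snd = ν ∧ ∀ᵐ p ∂γ, |p.1 - p.2| ≤ W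

/-! The Laplace density changes by a factor of at most `exp (|c| / b)` under a shift by `c`,
because `-|w + c| ≤ |c| - |w|`. Hence for inputs `x, y` with `|x - y| ≤ W` and scale `b = W / ε`,
the probabilities that `x + Z` and `y + Z` land in `T` differ by a factor of at most `exp ε`.
Integrating this against a coupling `γ` of `μ` and `ν` supported on `|x - y| ≤ W` gives the
bound for the convolutions, since `(μ ∗ L) T = ∫ L ((x + ·) ⁻¹' T) dμ(x)`. -/

open scoped ENNReal

section AddMonoid

variable {M : Type*} [AddMonoid M] [MeasurableSpace M] [MeasurableAdd₂ M]

theorem MeasureTheory.Measure.conv_apply (μ ν : Measure M) [SFinite ν] {T : Set M}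
    (hT : MeasurableSet T) :
    μ.conv ν T = ∫⁻ x, ν ((x + ·) ⁻¹' T) ∂μ := by
  rw [Measure.conv, Measure.map_apply measurable_add hT, Measure.prod_apply (measurable_add hT)]
  rfl

theorem measurable_measure_preimage_const_add (ν : Measure M) [SFinite ν] {T : Set M}
    (hT : MeasurableSet T) : Measurable fun x => ν ((x + ·) ⁻¹' T) :=
  measurable_measure_prodMk_left (measurable_add hT)

end AddMonoid

theorem lintegral_map_fst_le_mul_lintegral_map_snd {α β : Type*} [MeasurableSpace α]
    [MeasurableSpace β] {γ : Measure (α × β)} {f : α → ℝ≥0∞} {g : β → ℝ≥0∞}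
    (hf : Measurable f) (hg : Measurable g) (C : ℝ≥0∞) (hfg : ∀ᵐ p ∂γ, f p.1 ≤ C * g p.2) :
    ∫⁻ x, f x ∂γ.map Prod.fst ≤ C * ∫⁻ y, g y ∂γ.map Prod.snd := by
  rw [lintegral_map hf measurable_fst, lintegral_map hg measurable_snd]
  exact (lintegral_mono_ae hfg).trans_eq (lintegral_const_mul C (hg.comp measurable_snd))

noncomputable def laplaceDensity (b z : ℝ) : ℝ≥0∞ :=
  ENNReal.ofReal ((1 / (2 * b)) * Real.exp (-|z| / b))

theorem laplaceMeasure_eq_withDensity (b : ℝ) :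
    laplaceMeasure b = volume.withDensity (laplaceDensity b) := rfl

instance (b : ℝ) : SFinite (laplaceMeasure b) := by
  rw [laplaceMeasure_eq_withDensity]
  infer_instance

theorem measurable_laplaceDensity (b : ℝ) : Measurable (laplaceDensity b) := by
  unfold laplaceDensity
  fun_prop

theorem laplaceDensity_add_le {b : ℝ} (hb : 0 < b) (w c : ℝ) :
    laplaceDensity b (w + c) ≤ ENNReal.ofReal (Real.exp (|c| / b)) * laplaceDensity b w := by
  rw [laplaceDensity, laplaceDensity, ← ENNReal.ofReal_mul (Real.exp_nonneg _)]
  refine ENNReal.ofReal_le_ofReal ?_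
  rw [mul_left_comm, ← Real.exp_add]
  gcongr
  have : |w| ≤ |w + c| + |c| := by simpa using abs_sub (w + c) c
  rw [← add_div, div_le_div_iff_of_pos_right hb]
  linarith

theorem laplaceMeasure_preimage_const_add_le {b : ℝ} (hb : 0 < b) {T : Set ℝ}
    (hT : MeasurableSet T) (x y : ℝ) :
    laplaceMeasure b ((x + ·) ⁻¹' T) ≤
      ENNReal.ofReal (Real.exp (|x - y| / b)) * laplaceMeasure b ((y + ·) ⁻¹' T) := by
  have hx : MeasurableSet ((x + ·) ⁻¹' T) := measurable_const_add x hT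
  have hy : MeasurableSet ((y + ·) ⁻¹' T) := measurable_const_add y hT
  rw [laplaceMeasure_eq_withDensity, withDensity_apply _ hx, withDensity_apply _ hy,
    ← lintegral_indicator hx, ← lintegral_indicator hy,
    ← lintegral_add_right_eq_self _ (y - x),
    ← lintegral_const_mul _ ((measurable_laplaceDensity b).indicator hy)]
  refine lintegral_mono fun w => ?_
  have hmem : w + (y - x) ∈ (x + ·) ⁻¹' T ↔ w ∈ (y + ·) ⁻¹' T := by
    simp only [Set.mem_preimage, show x + (w + (y - x)) = y + w by ring]
  by_cases hw : w ∈ (y + ·) ⁻¹' T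
  · rw [Set.indicator_of_mem (hmem.2 hw), Set.indicator_of_mem hw, abs_sub_comm]
    exact laplaceDensity_add_le hb w (y - x)
  · rw [Set.indicator_of_notMem (mt hmem.1 hw), Set.indicator_of_notMem hw]
    exact zero_le

theorem wasserstein_mechanism_privacy_general
    (μ ν : Measure ℝ)
    (W ε : ℝ) (hW : 0 < W) (hε : 0 < ε)
    (hWinfty : IsWinftyCouplingLe μ ν W) :
    ∀ T : Set ℝ, MeasurableSet T →
      (Measure.conv μ (laplaceMeasure (W / ε))) T ≤
        ENNReal.ofReal (Real.exp ε) * (Measure.conv ν (laplaceMeasure (W / ε))) T := by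
  intro T hT
  obtain ⟨γ, -, rfl, rfl, hγ⟩ := hWinfty
  have hb : 0 < W / ε := div_pos hW hε
  have hL := measurable_measure_preimage_const_add (laplaceMeasure (W / ε)) hT
  rw [Measure.conv_apply _ _ hT, Measure.conv_apply _ _ hT]
  refine lintegral_map_fst_le_mul_lintegral_map_snd hL hL _ ?_
  filter_upwards [hγ] with p hp
  calc laplaceMeasure (W / ε) ((p.1 + ·) ⁻¹' T)
      ≤ ENNReal.ofReal (Real.exp (|p.1 - p.2| / (W / ε))) *
          laplaceMeasure (W / ε) ((p.2 + ·) ⁻¹' T) :=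
        laplaceMeasure_preimage_const_add_le hb hT p.1 p.2
    _ ≤ ENNReal.ofReal (Real.exp ε) * laplaceMeasure (W / ε) ((p.2 + ·) ⁻¹' T) := by
        gcongr
        rw [div_le_iff₀ hb, mul_div_cancel₀ W hε.ne']
        exact hp

/-- Wasserstein Mechanism core inequality: if `W_∞(μ, ν) ≤ W` and `Z` is
Laplace noise with scale `W/ε` independent of the data, then for every measurable `T`,
`P(Y_μ + Z ∈ T) ≤ e^ε P(Y_ν + Z ∈ T)`, i.e. the convolutions with the Laplace measure
have max-divergence at most `ε`. -/
theorem wasserstein_mechanism_privacy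
    (μ ν : Measure ℝ) [IsProbabilityMeasure μ] [IsProbabilityMeasure ν]
    (W ε : ℝ) (hW : 0 < W) (hε : 0 < ε)
    (hWinfty : IsWinftyCouplingLe μ ν W) :
    ∀ T : Set ℝ, MeasurableSet T →
      (Measure.conv μ (laplaceMeasure (W / ε))) T ≤
        ENNReal.ofReal (Real.exp ε) * (Measure.conv ν (laplaceMeasure (W / ε))) T :=
  wasserstein_mechanism_privacy_general μ ν W ε hW hε hWinfty
end
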